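/- arXiv:1406.7736 — 3 statements merged into one kernel-verified Lean document; each statement's English description precedes it below -/
import Mathlib

section
/- Let D be a divisor on P^1 over the complex numbers of positive degree, let t be a fixed coordinate on P^1, and let f be a nonzero global section of O(D), i.e. a nonzero rational function with div(f) + D effective. Then there exists another global section g of O(D) and complex numbers a1, b1, a2, b2 such that (a1*f + b1*g)/(a2*f + b2*g) = t. -/
/-
Since `deg div(f) = 0` and `deg D > 0`, the effective divisor `div(f) + D` is positive at some
point `x₀`, so `f` is even a section of `O(D - x₀)`. It then suffices to find `h ∈ L(x₀)`,
`h ≠ 0`, with `t` a Möbius transform of `h`, and to take `g = f h`. If `x₀` is the pole `p` of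
`t`, take `h = t`. Otherwise let `c` be the value of `t` at `x₀`: `t - c` has at most the simple
pole of `t` and vanishes at `x₀`, so, its divisor having degree zero, `div(t - c) = x₀ - p` and
`h = (t - c)⁻¹` works.
-/

open Polynomial

/-- The order of vanishing (positive) or of the pole (negative) of a nonzero rational
function on `P^1` over `ℂ` at a point of `P^1`, where `some a` denotes the finite point
with coordinate `a` and `none` denotes the point at infinity. -/
noncomputable def ordAt (r : RatFunc ℂ) : Option ℂ → ℤ
  | some a => (r.num.rootMultiplicity a : ℤ) - (r.denom.rootMultiplicity a : ℤ)
  | none => (r.denom.natDegree : ℤ) - (r.num.natDegree : ℤ)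

/-- A coordinate function on `P^1`: a nonzero rational function with exactly one zero and
exactly one pole, both of order one. -/
def IsCoordinate (t : RatFunc ℂ) : Prop :=
  t ≠ 0 ∧ ∃ z p : Option ℂ, z ≠ p ∧ ordAt t z = 1 ∧ ordAt t p = -1 ∧
    ∀ x : Option ℂ, x ≠ z → x ≠ p → ordAt t x = 0

lemma Polynomial.mem_roots_toFinset_of_rootMultiplicity_ne_zero {P : ℂ[X]} {a : ℂ}
    (h : P.rootMultiplicity a ≠ 0) : a ∈ P.roots.toFinset := by
  rw [Multiset.mem_toFinset, ← Multiset.count_ne_zero, count_roots]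
  exact h

lemma Polynomial.sum_rootMultiplicity_eq_natDegree (P : ℂ[X]) {A : Finset ℂ}
    (hA : P.roots.toFinset ⊆ A) : ∑ a ∈ A, P.rootMultiplicity a = P.natDegree := by
  rw [← IsAlgClosed.card_roots_eq_natDegree, ← Multiset.toFinset_sum_count_eq,
    Finset.sum_subset hA fun a _ ha => Multiset.count_eq_zero.2 (by simpa using ha)]
  simp only [count_roots]

lemma Finsupp.add_le_sum_of_nonneg {α M : Type*} [AddCommMonoid M] [PartialOrder M]
    [IsOrderedAddMonoid M] {E : α →₀ M} (hE : ∀ x, 0 ≤ E x) {x y : α} (hxy : x ≠ y) :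
    E x + E y ≤ E.sum fun _ n => n := by
  classical
  rw [Finsupp.sum_of_support_subset E Finset.subset_union_left _ fun _ _ => rfl,
    ← Finset.sum_pair hxy]
  exact Finset.sum_le_sum_of_subset_of_nonneg (s := {x, y}) Finset.subset_union_right
    fun i _ _ => hE i

section OrderOfVanishing

variable {r s : RatFunc ℂ}

lemma ordAt_div_some {P Q : ℂ[X]} (hP : P ≠ 0) (hQ : Q ≠ 0) (a : ℂ) :
    ordAt (algebraMap ℂ[X] (RatFunc ℂ) P / algebraMap ℂ[X] (RatFunc ℂ) Q) (some a) =
      (P.rootMultiplicity a : ℤ) - Q.rootMultiplicity a := by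
  set r := algebraMap ℂ[X] (RatFunc ℂ) P / algebraMap ℂ[X] (RatFunc ℂ) Q
  have hr : r ≠ 0 := div_ne_zero (RatFunc.algebraMap_ne_zero hP) (RatFunc.algebraMap_ne_zero hQ)
  have h := congrArg (rootMultiplicity a)
    ((RatFunc.num_mul_eq_mul_denom_iff (x := r) (p := P) hQ).2 rfl)
  rw [rootMultiplicity_mul (mul_ne_zero (RatFunc.num_ne_zero hr) hQ),
    rootMultiplicity_mul (mul_ne_zero hP r.denom_ne_zero)] at h
  simp only [ordAt]
  omega

lemma ordAt_div_none {P Q : ℂ[X]} (hP : P ≠ 0) (hQ : Q ≠ 0) :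
    ordAt (algebraMap ℂ[X] (RatFunc ℂ) P / algebraMap ℂ[X] (RatFunc ℂ) Q) none =
      (Q.natDegree : ℤ) - P.natDegree := by
  set r := algebraMap ℂ[X] (RatFunc ℂ) P / algebraMap ℂ[X] (RatFunc ℂ) Q
  have hr : r ≠ 0 := div_ne_zero (RatFunc.algebraMap_ne_zero hP) (RatFunc.algebraMap_ne_zero hQ)
  have h := congrArg natDegree ((RatFunc.num_mul_eq_mul_denom_iff (x := r) (p := P) hQ).2 rfl)
  rw [natDegree_mul (RatFunc.num_ne_zero hr) hQ, natDegree_mul hP r.denom_ne_zero] at h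
  simp only [ordAt]
  omega

lemma ordAt_C (c : ℂ) (x : Option ℂ) : ordAt (RatFunc.C c) x = 0 := by
  cases x <;> simp [ordAt, RatFunc.num_C, RatFunc.denom_C, rootMultiplicity_C]

lemma ordAt_mul (hr : r ≠ 0) (hs : s ≠ 0) (x : Option ℂ) :
    ordAt (r * s) x = ordAt r x + ordAt s x := by
  have h : r * s = algebraMap ℂ[X] (RatFunc ℂ) (r.num * s.num)
      / algebraMap ℂ[X] (RatFunc ℂ) (r.denom * s.denom) := by
    rw [map_mul, map_mul, ← div_mul_div_comm, RatFunc.num_div_denom, RatFunc.num_div_denom]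
  have hn := mul_ne_zero (RatFunc.num_ne_zero hr) (RatFunc.num_ne_zero hs)
  have hd := mul_ne_zero r.denom_ne_zero s.denom_ne_zero
  rw [h]
  cases x with
  | some a =>
    rw [ordAt_div_some hn hd, rootMultiplicity_mul hn, rootMultiplicity_mul hd]
    simp only [ordAt]
    push_cast
    ring
  | none =>
    rw [ordAt_div_none hn hd, natDegree_mul (RatFunc.num_ne_zero hr) (RatFunc.num_ne_zero hs),
      natDegree_mul r.denom_ne_zero s.denom_ne_zero]
    simp only [ordAt]
    push_cast
    ring

lemma ordAt_inv (hr : r ≠ 0) (x : Option ℂ) : ordAt r⁻¹ x = -ordAt r x := by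
  have h := ordAt_mul hr (inv_ne_zero hr) x
  rw [mul_inv_cancel₀ hr, ← map_one RatFunc.C, ordAt_C] at h
  omega

lemma rootMultiplicity_num_eq_zero_or (r : RatFunc ℂ) (a : ℂ) :
    r.num.rootMultiplicity a = 0 ∨ r.denom.rootMultiplicity a = 0 := by
  rcases aeval_ne_zero_of_isCoprime (RatFunc.isCoprime_num_denom r) a with h | h
  · exact Or.inl (rootMultiplicity_eq_zero (by simpa using h))
  · exact Or.inr (rootMultiplicity_eq_zero (by simpa using h))

lemma sub_C_eq_div (r : RatFunc ℂ) (c : ℂ) :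
    r - RatFunc.C c = algebraMap ℂ[X] (RatFunc ℂ) (r.num - Polynomial.C c * r.denom)
      / algebraMap ℂ[X] (RatFunc ℂ) r.denom := by
  rw [map_sub, map_mul, sub_div, mul_div_assoc,
    div_self (RatFunc.algebraMap_ne_zero r.denom_ne_zero), mul_one, RatFunc.num_div_denom,
    RatFunc.algebraMap_C]

lemma num_sub_C_mul_denom_ne_zero {c : ℂ} (hr : r ≠ RatFunc.C c) :
    r.num - Polynomial.C c * r.denom ≠ 0 := fun h =>
  hr (sub_eq_zero.1 (by rw [sub_C_eq_div, h, map_zero, zero_div]))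

lemma min_ordAt_le_ordAt_sub_C (r : RatFunc ℂ) (c : ℂ) (x : Option ℂ) :
    min (ordAt r x) 0 ≤ ordAt (r - RatFunc.C c) x := by
  by_cases hrc : r = RatFunc.C c
  · rw [hrc, sub_self, ← map_zero (RatFunc.C (K := ℂ)), ordAt_C, ordAt_C]
    exact min_le_right _ _
  have hm := num_sub_C_mul_denom_ne_zero hrc
  rw [sub_C_eq_div]
  cases x with
  | some a =>
    rw [ordAt_div_some hm r.denom_ne_zero]
    have := rootMultiplicity_num_eq_zero_or r a
    simp only [ordAt]
    omega
  | none =>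
    rw [ordAt_div_none hm r.denom_ne_zero]
    have := natDegree_sub_le r.num (Polynomial.C c * r.denom)
    have := natDegree_C_mul_le c r.denom
    simp only [ordAt]
    omega

lemma exists_one_le_ordAt_sub_C (hr : ∀ c, r ≠ RatFunc.C c) {x : Option ℂ}
    (hx : 0 ≤ ordAt r x) : ∃ c, 1 ≤ ordAt (r - RatFunc.C c) x := by
  have hm c := num_sub_C_mul_denom_ne_zero (hr c)
  cases x with
  | some a =>
    have hda : r.denom.eval a ≠ 0 := by
      intro h
      have := (rootMultiplicity_pos r.denom_ne_zero).2 h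
      have := rootMultiplicity_num_eq_zero_or r a
      simp only [ordAt] at hx
      omega
    set c := r.num.eval a / r.denom.eval a
    refine ⟨c, ?_⟩
    rw [sub_C_eq_div, ordAt_div_some (hm c) r.denom_ne_zero, rootMultiplicity_eq_zero hda]
    have := (rootMultiplicity_pos (hm c) (x := a)).2 (by simp [c, div_mul_cancel₀ _ hda])
    omega
  | none =>
    set d := r.denom.natDegree
    have hnd : r.num.natDegree ≤ d := by simp only [ordAt] at hx; omega
    set c := r.num.coeff d / r.denom.leadingCoeff
    have hmd : (r.num - Polynomial.C c * r.denom).natDegree ≤ d :=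
      (natDegree_sub_le_of_le hnd (natDegree_C_mul_le _ _)).trans (max_self d).le
    have hcoeff : (r.num - Polynomial.C c * r.denom).coeff d = 0 := by
      simp [c, d, coeff_C_mul, div_mul_cancel₀ _ (leadingCoeff_ne_zero.2 r.denom_ne_zero)]
    have hlt : (r.num - Polynomial.C c * r.denom).natDegree < d := hmd.lt_of_ne fun h =>
      hm c (leadingCoeff_eq_zero.1 (by rw [leadingCoeff, h, hcoeff]))
    refine ⟨c, ?_⟩
    rw [sub_C_eq_div, ordAt_div_none (hm c) r.denom_ne_zero]
    omega

end OrderOfVanishing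

lemma mem_of_ordAt_ne_zero (r : RatFunc ℂ) {x : Option ℂ} (hx : ordAt r x ≠ 0) :
    x ∈ insert none ((r.num.roots.toFinset ∪ r.denom.roots.toFinset).image some) := by
  cases x with
  | none => exact Finset.mem_insert_self _ _
  | some a =>
    refine Finset.mem_insert_of_mem (Finset.mem_image_of_mem _ ?_)
    by_cases ha : r.num.rootMultiplicity a = 0
    · simp only [ordAt, ha] at hx
      exact Finset.mem_union_right _ (mem_roots_toFinset_of_rootMultiplicity_ne_zero (by omega))
    · exact Finset.mem_union_left _ (mem_roots_toFinset_of_rootMultiplicity_ne_zero ha)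

noncomputable def principalDivisor (r : RatFunc ℂ) : Option ℂ →₀ ℤ :=
  Finsupp.onFinset _ (ordAt r) fun _ => mem_of_ordAt_ne_zero r

@[simp]
lemma principalDivisor_apply (r : RatFunc ℂ) (x : Option ℂ) : principalDivisor r x = ordAt r x :=
  rfl

lemma sum_principalDivisor (r : RatFunc ℂ) : (principalDivisor r).sum (fun _ n => n) = 0 := by
  have hnum := r.num.sum_rootMultiplicity_eq_natDegree
    (Finset.subset_union_left (s₂ := r.denom.roots.toFinset))
  have hden := r.denom.sum_rootMultiplicity_eq_natDegree
    (Finset.subset_union_right (s₁ := r.num.roots.toFinset))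
  rw [principalDivisor, Finsupp.onFinset_sum _ fun _ => rfl, Finset.sum_insert (by simp),
    Finset.sum_image (by simp)]
  simp only [ordAt, Finset.sum_sub_distrib, ← Nat.cast_sum, hnum, hden]
  ring

def IsGlobalSection (D : Option ℂ →₀ ℤ) (r : RatFunc ℂ) : Prop :=
  ∀ x, 0 ≤ ordAt r x + D x

lemma IsGlobalSection.mul {D E : Option ℂ →₀ ℤ} {r s : RatFunc ℂ} (hD : IsGlobalSection D r)
    (hE : IsGlobalSection E s) (hr : r ≠ 0) (hs : s ≠ 0) : IsGlobalSection (D + E) (r * s) :=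
  fun x => by
    rw [ordAt_mul hr hs, Finsupp.add_apply]
    linarith [hD x, hE x]

lemma IsGlobalSection.exists_sub_single {D : Option ℂ →₀ ℤ} (hdeg : 0 < D.sum fun _ n => n)
    {f : RatFunc ℂ} (hf : IsGlobalSection D f) :
    ∃ x₀, IsGlobalSection (D - Finsupp.single x₀ 1) f := by
  set E := principalDivisor f + D
  have hE : 0 < E.sum fun _ n => n := by
    rwa [Finsupp.sum_add_index' (fun _ => rfl) fun _ _ _ => rfl, sum_principalDivisor, zero_add]
  obtain ⟨x₀, -, hx₀⟩ := Finset.exists_lt_of_sum_lt (s := E.support) (f := fun _ => (0 : ℤ))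
    (by simpa [Finsupp.sum] using hE)
  refine ⟨x₀, fun x => ?_⟩
  have := hf x
  simp only [E, Finsupp.add_apply, principalDivisor_apply] at hx₀
  rw [Finsupp.sub_apply, Finsupp.single_apply]
  split_ifs with h
  · subst h
    omega
  · omega

lemma inv_isGlobalSection_single {s : RatFunc ℂ} {p x₀ : Option ℂ} (hs : s ≠ 0)
    (hsp : IsGlobalSection (Finsupp.single p 1) s) (hx₀p : x₀ ≠ p) (hx₀ : 1 ≤ ordAt s x₀) :
    IsGlobalSection (Finsupp.single x₀ 1) s⁻¹ := by
  set E := principalDivisor s + Finsupp.single p 1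
  have hE : ∀ x, 0 ≤ E x := hsp
  have hsum : (E.sum fun _ n => n) = 1 := by
    rw [Finsupp.sum_add_index' (fun _ => rfl) fun _ _ _ => rfl, sum_principalDivisor,
      Finsupp.sum_single_index rfl, zero_add]
  have hpair {x y : Option ℂ} (hxy : x ≠ y) : E x + E y ≤ 1 :=
    hsum ▸ Finsupp.add_le_sum_of_nonneg hE hxy
  have hEx y : E y = ordAt s y + Finsupp.single p 1 y := rfl
  intro x
  rw [ordAt_inv hs]
  obtain rfl | hx := eq_or_ne x x₀
  · have h1 : E x + E p ≤ 1 := hpair hx₀p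
    rw [hEx x, Finsupp.single_eq_of_ne hx₀p] at h1
    rw [Finsupp.single_eq_same]
    linarith [hE p]
  · have h1 : E x + E x₀ ≤ 1 := hpair hx
    have hp : 0 ≤ Finsupp.single p (1 : ℤ) x := Finsupp.single_nonneg.2 zero_le_one x
    rw [hEx x, hEx x₀, Finsupp.single_eq_of_ne hx₀p] at h1
    rw [Finsupp.single_eq_of_ne hx]
    linarith

lemma IsCoordinate.exists_isGlobalSection_single {t : RatFunc ℂ} (ht : IsCoordinate t)
    (x₀ : Option ℂ) :
    ∃ h : RatFunc ℂ, h ≠ 0 ∧ IsGlobalSection (Finsupp.single x₀ 1) h ∧ ∃ a₁ b₁ a₂ b₂ : ℂ,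
      (RatFunc.C a₁ + RatFunc.C b₁ * h) / (RatFunc.C a₂ + RatFunc.C b₂ * h) = t := by
  obtain ⟨ht0, z, p, -, hz, hp, hother⟩ := ht
  have htp : IsGlobalSection (Finsupp.single p 1) t := by
    intro x
    rw [Finsupp.single_apply]
    by_cases hxp : p = x
    · subst hxp
      simp [hp]
    by_cases hxz : x = z
    · subst hxz
      simp [hz, hxp]
    · simp [hother x hxz (Ne.symm hxp), hxp]
  by_cases hx₀p : x₀ = p
  · subst hx₀p
    exact ⟨t, ht0, htp, 0, 1, 1, 0, by simp⟩
  have hnc (c : ℂ) : t ≠ RatFunc.C c := fun h => by simp [h, ordAt_C] at hz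
  obtain ⟨c, hc⟩ := exists_one_le_ordAt_sub_C hnc (by simpa [hx₀p] using htp x₀)
  have hs : t - RatFunc.C c ≠ 0 := sub_ne_zero.2 (hnc c)
  have hsp : IsGlobalSection (Finsupp.single p 1) (t - RatFunc.C c) := fun x => by
    have := min_ordAt_le_ordAt_sub_C t c x
    have := htp x
    have : 0 ≤ Finsupp.single p (1 : ℤ) x := Finsupp.single_nonneg.2 zero_le_one x
    omega
  refine ⟨(t - RatFunc.C c)⁻¹, inv_ne_zero hs, inv_isGlobalSection_single hs hsp hx₀p hc,
    1, c, 0, 1, ?_⟩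
  simp only [map_one, map_zero, one_mul, zero_add]
  field_simp
  ring

/-- Corollary `ratfuncexists`: for a divisor `D` on `P^1` of positive
degree (a finitely supported `ℤ`-valued function on the points of `P^1`) and a nonzero
global section `f` of `O(D)` (i.e. `div(f) + D ≥ 0`), there exist a global section `g` of
`O(D)` and constants `a1, b1, a2, b2 ∈ ℂ` such that `(a1*f + b1*g)/(a2*f + b2*g) = t`,
where `t` is a fixed coordinate on `P^1`. -/
theorem stmt1 (D : Option ℂ →₀ ℤ) (hdeg : 0 < D.sum fun _ n => n)
    (t : RatFunc ℂ) (ht : IsCoordinate t)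
    (f : RatFunc ℂ) (hf : f ≠ 0) (hsec : ∀ x : Option ℂ, 0 ≤ ordAt f x + D x) :
    ∃ g : RatFunc ℂ, g ≠ 0 ∧ (∀ x : Option ℂ, 0 ≤ ordAt g x + D x) ∧
      ∃ a1 b1 a2 b2 : ℂ,
        (RatFunc.C a1 * f + RatFunc.C b1 * g) / (RatFunc.C a2 * f + RatFunc.C b2 * g) = t := by
  obtain ⟨x₀, hfx₀⟩ := IsGlobalSection.exists_sub_single hdeg hsec
  obtain ⟨h, hh0, hhx₀, a₁, b₁, a₂, b₂, hth⟩ := ht.exists_isGlobalSection_single x₀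
  have hg : IsGlobalSection D (f * h) := sub_add_cancel D _ ▸ hfx₀.mul hhx₀ hf hh0
  refine ⟨f * h, mul_ne_zero hf hh0, hg, a₁, b₁, a₂, b₂, ?_⟩
  rw [← hth, ← mul_div_mul_left (RatFunc.C a₁ + RatFunc.C b₁ * h) _ hf]
  ring
end

section
/- Let A be a module over a ring R, let q >= 1, and let A_1, ..., A_q be submodules of A with the property that A_{jk} := A for pairs (as in a Cech setup where all double intersections give the full module). Consider the Cech-type complex B with B^i the direct sum over increasing sequences of length i+1 of the corresponding intersections (so B^0 = oplus_j A_j, B^1 = oplus_{j<k} A). Then H^1(B) is isomorphic to the quotient of oplus_{j=1}^q (A/A_j) by the diagonal image of A. -/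
/-! The coboundary `δ : ⊕_j A → ⊕_{j<k} A`, `δ f = (f_k - f_j)_{j<k}`, maps onto the
1-cocycles (a cocycle `y` is `δ` of `j ↦ y_{0j}`, by the cocycle relation on the triples
`0 < j < k`), its kernel is the diagonal copy of `A`, and `d⁰` is the restriction of `δ` to
`⊕_j A_j`. So `H¹(B)` and `(⊕_j A/A_j)/A` are both the quotient of `⊕_j A` by `⊕_j A_j + A`. -/

/-- Index set of pairs `j < k` in `Fin q`. -/
def PairIdx (q : ℕ) : Type := {p : Fin q × Fin q // p.1 < p.2}

/-- Index set of triples `j < k < l` in `Fin q`. -/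
def TripleIdx (q : ℕ) : Type := {t : (Fin q × Fin q) × Fin q // t.1.1 < t.1.2 ∧ t.1.2 < t.2}

variable (R : Type*) [CommRing R] (A : Type*) [AddCommGroup A] [Module R A]

/-- The Čech differential `B^0 = ⊕_j A_j → B^1 = ⊕_{j<k} A_{j,k} = ⊕_{j<k} A`
(using that all pairwise modules `A_{j,k}` equal `A`). -/
noncomputable def cechD0 (q : ℕ) (Asub : Fin q → Submodule R A) :
    ((j : Fin q) → Asub j) →ₗ[R] (PairIdx q → A) where
  toFun x p := (x p.1.2 : A) - (x p.1.1 : A)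
  map_add' x y := by
    funext p
    simp only [Pi.add_apply, Submodule.coe_add]
    abel
  map_smul' c x := by
    funext p
    simp only [Pi.smul_apply, SetLike.val_smul, RingHom.id_apply, smul_sub]

/-- The Čech differential `B^1 = ⊕_{j<k} A → B^2 = ⊕_{j<k<l} A`. -/
noncomputable def cechD1 (q : ℕ) : (PairIdx q → A) →ₗ[R] (TripleIdx q → A) where
  toFun y t :=
    y ⟨(t.1.1.2, t.1.2), t.2.2⟩ - y ⟨(t.1.1.1, t.1.2), t.2.1.trans t.2.2⟩
      + y ⟨(t.1.1.1, t.1.1.2), t.2.1⟩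
  map_add' x y := by
    funext t
    simp only [Pi.add_apply]
    change (x _ + y _) - (x _ + y _) + (x _ + y _) = _
    abel
  map_smul' c x := by
    funext t
    simp only [Pi.smul_apply, RingHom.id_apply, smul_sub, smul_add]
    rfl

/-- The first cohomology `H^1(B^•) = ker d^1 / im d^0` of the Čech-type complex. -/
noncomputable def cechH1 (q : ℕ) (Asub : Fin q → Submodule R A) : Type _ :=
  LinearMap.ker (cechD1 R A q) ⧸
    (Submodule.comap (LinearMap.ker (cechD1 R A q)).subtype
      (LinearMap.range (cechD0 R A q Asub)))

noncomputable instance (q : ℕ) (Asub : Fin q → Submodule R A) :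
    AddCommGroup (cechH1 R A q Asub) := by
  delta cechH1; infer_instance

noncomputable instance (q : ℕ) (Asub : Fin q → Submodule R A) :
    Module R (cechH1 R A q Asub) := by
  delta cechH1; infer_instance

/-- The quotient `(⊕_j A/A_j) / A`, where `A` is embedded diagonally. -/
noncomputable def diagQuot (q : ℕ) (Asub : Fin q → Submodule R A) : Type _ :=
  ((j : Fin q) → A ⧸ Asub j) ⧸ LinearMap.range (LinearMap.pi fun j => (Asub j).mkQ)

noncomputable instance (q : ℕ) (Asub : Fin q → Submodule R A) :
    AddCommGroup (diagQuot R A q Asub) := by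
  delta diagQuot; infer_instance

noncomputable instance (q : ℕ) (Asub : Fin q → Submodule R A) :
    Module R (diagQuot R A q Asub) := by
  delta diagQuot; infer_instance

open LinearMap Submodule

def cechCoboundary (q : ℕ) : (Fin q → A) →ₗ[R] (PairIdx q → A) where
  toFun f p := f p.1.2 - f p.1.1
  map_add' f g := by
    funext p
    simp only [Pi.add_apply]
    abel
  map_smul' c f := by
    funext p
    simp only [Pi.smul_apply, smul_sub, RingHom.id_apply]

variable {R A}

theorem LinearMap.ker_piMap_mkQ {ι : Type*} (p : ι → Submodule R A) :
    ker (piMap (R := R) fun i => (p i).mkQ) = Submodule.pi Set.univ p := by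
  ext f
  simp [funext_iff]

@[simp]
theorem cechCoboundary_apply {q : ℕ} (f : Fin q → A) (p : PairIdx q) :
    cechCoboundary R A q f p = f p.1.2 - f p.1.1 :=
  rfl

theorem range_cechD0 (q : ℕ) (Asub : Fin q → Submodule R A) :
    range (cechD0 R A q Asub) = (Submodule.pi Set.univ Asub).map (cechCoboundary R A q) := by
  ext y
  constructor
  · rintro ⟨x, rfl⟩
    exact ⟨fun j => x j, fun j _ => (x j).2, rfl⟩
  · rintro ⟨f, hf, rfl⟩
    exact ⟨fun j => ⟨f j, hf j trivial⟩, rfl⟩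

theorem ker_cechCoboundary (q : ℕ) :
    ker (cechCoboundary R A q) = range (LinearMap.const : A →ₗ[R] Fin q → A) := by
  refine le_antisymm (fun f hf => ?_) ?_
  · have hconst : ∀ j k, f j = f k := by
      have hlt : ∀ j k, j < k → f j = f k := fun j k hjk =>
        (sub_eq_zero.mp (congrFun hf ⟨(j, k), hjk⟩)).symm
      intro j k
      rcases lt_trichotomy j k with h | rfl | h
      exacts [hlt j k h, rfl, (hlt k j h).symm]
    rcases isEmpty_or_nonempty (Fin q) with _ | ⟨⟨i⟩⟩
    · exact ⟨0, Subsingleton.elim _ _⟩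
    · exact ⟨f i, funext fun j => hconst i j⟩
  · rintro _ ⟨a, rfl⟩
    ext p
    simp

theorem cechD1_comp_cechCoboundary (q : ℕ) : cechD1 R A q ∘ₗ cechCoboundary R A q = 0 := by
  refine LinearMap.ext fun f => funext fun t => ?_
  change (f t.1.2 - f t.1.1.2) - (f t.1.2 - f t.1.1.1) + (f t.1.1.2 - f t.1.1.1) = 0
  abel

def cechCone {n : ℕ} (y : PairIdx (n + 1) → A) : Fin (n + 1) → A :=
  fun j => if h : 0 < j then y ⟨(0, j), h⟩ else 0

theorem cechCoboundary_cechCone {n : ℕ} {y : PairIdx (n + 1) → A}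
    (hy : cechD1 R A (n + 1) y = 0) : cechCoboundary R A (n + 1) (cechCone y) = y := by
  funext p
  have hk : 0 < p.1.2 := lt_of_le_of_lt (Fin.zero_le _) p.2
  rcases (Fin.zero_le p.1.1).eq_or_lt with h0 | hj
  · simp only [cechCoboundary_apply, cechCone, dif_pos hk, ← h0, lt_irrefl, dite_false, sub_zero]
    exact congrArg y (Subtype.ext (Prod.ext h0 rfl))
  · have hcocycle : y p - y ⟨(0, p.1.2), hk⟩ + y ⟨(0, p.1.1), hj⟩ = 0 :=
      congrFun hy ⟨((0, p.1.1), p.1.2), hj, p.2⟩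
    simp only [cechCoboundary_apply, cechCone, dif_pos hk, dif_pos hj]
    rw [eq_comm, ← sub_eq_zero, ← hcocycle]
    abel

theorem range_cechCoboundary (q : ℕ) : range (cechCoboundary R A q) = ker (cechD1 R A q) := by
  refine le_antisymm ?_ fun y hy => ?_
  · rw [LinearMap.range_le_ker_iff]
    exact cechD1_comp_cechCoboundary q
  · obtain _ | n := q
    · exact ⟨0, funext fun p => p.1.1.elim0⟩
    · exact ⟨cechCone y, cechCoboundary_cechCone hy⟩

noncomputable def cechH1Mk (q : ℕ) (Asub : Fin q → Submodule R A) :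
    (Fin q → A) →ₗ[R]
      ker (cechD1 R A q) ⧸ comap (ker (cechD1 R A q)).subtype (range (cechD0 R A q Asub)) :=
  (comap (ker (cechD1 R A q)).subtype (range (cechD0 R A q Asub))).mkQ ∘ₗ
    (cechCoboundary R A q).codRestrict _ fun f =>
      (range_cechCoboundary q).le (mem_range_self (cechCoboundary R A q) f)

theorem cechH1Mk_surjective (q : ℕ) (Asub : Fin q → Submodule R A) :
    Function.Surjective (cechH1Mk q Asub) := by
  refine (mkQ_surjective _).comp fun ⟨y, hy⟩ => ?_
  obtain ⟨f, rfl⟩ := (range_cechCoboundary q).ge hy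
  exact ⟨f, rfl⟩

theorem ker_cechH1Mk (q : ℕ) (Asub : Fin q → Submodule R A) :
    ker (cechH1Mk q Asub) =
      Submodule.pi Set.univ Asub ⊔ range (LinearMap.const : A →ₗ[R] Fin q → A) := by
  rw [cechH1Mk, ker_comp, ker_mkQ, ← comap_comp, subtype_comp_codRestrict, range_cechD0,
    comap_map_eq, ker_cechCoboundary]

noncomputable def diagQuotMk (q : ℕ) (Asub : Fin q → Submodule R A) :
    (Fin q → A) →ₗ[R]
      ((j : Fin q) → A ⧸ Asub j) ⧸ range (LinearMap.pi fun j => (Asub j).mkQ) :=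
  (range (LinearMap.pi fun j => (Asub j).mkQ)).mkQ ∘ₗ piMap fun j => (Asub j).mkQ

theorem diagQuotMk_surjective (q : ℕ) (Asub : Fin q → Submodule R A) :
    Function.Surjective (diagQuotMk q Asub) :=
  (mkQ_surjective _).comp (Function.Surjective.piMap fun j => mkQ_surjective (Asub j))

theorem ker_diagQuotMk (q : ℕ) (Asub : Fin q → Submodule R A) :
    ker (diagQuotMk q Asub) =
      Submodule.pi Set.univ Asub ⊔ range (LinearMap.const : A →ₗ[R] Fin q → A) := by
  have hdiag : LinearMap.pi (fun j => (Asub j).mkQ) =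
      piMap (fun j => (Asub j).mkQ) ∘ₗ (LinearMap.const : A →ₗ[R] Fin q → A) :=
    rfl
  rw [diagQuotMk, ker_comp, ker_mkQ, hdiag, range_comp, comap_map_eq, ker_piMap_mkQ, sup_comm]

theorem stmt5_general (q : ℕ) (Asub : Fin q → Submodule R A) :
    Nonempty (cechH1 R A q Asub ≃ₗ[R] diagQuot R A q Asub) :=
  ⟨((cechH1Mk q Asub).quotKerEquivOfSurjective (cechH1Mk_surjective q Asub)).symm ≪≫ₗ
    quotEquivOfEq _ _ ((ker_cechH1Mk q Asub).trans (ker_diagQuotMk q Asub).symm) ≪≫ₗ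
    (diagQuotMk q Asub).quotKerEquivOfSurjective (diagQuotMk_surjective q Asub)⟩

/-- Corollary `h1compute`: for a module `A` over a ring `R`, `q ≥ 1`,
and submodules `A_1, ..., A_q` of `A`, in the Čech-type complex `B^•` with
`B^0 = ⊕_j A_j`, `B^1 = ⊕_{j<k} A_{j,k}` and all `A_{j,k} = A`, the first cohomology
`H^1(B^•)` is isomorphic to `(⊕_{j=1}^q A/A_j) / A`, where `A` maps to `⊕_j A/A_j`
diagonally. -/
theorem stmt5 (q : ℕ) (hq : 1 ≤ q) (Asub : Fin q → Submodule R A) :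
    Nonempty (cechH1 R A q Asub ≃ₗ[R] diagQuot R A q Asub) :=
  stmt5_general q Asub
end

section
/- Let N be a rank-2 lattice (free abelian group Z^2) with dual lattice M. Let a1 != a2 be elements of N and chi in M with chi(a1) = chi(a2) = 1. Then a1 and a2 span N tensor Q as a Q-vector space. Moreover, if chi1 is the primitive lattice point on the ray {chi' in M : chi'(a1) > 0, chi'(a2) = 0} and chi2 is the primitive lattice point on the ray {chi' in M : chi'(a1) = 0, chi'(a2) > 0}, then chi1(a1) = chi2(a2) = L, where L is the lattice length of a1 - a2 (the number of lattice points on the segment from a1 to a2 counting exactly one endpoint, equivalently the largest integer d such that (a1-a2)/d lies in N). -/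
/-!
Write `v^⊥ = (-v₁, v₀)`. Since `χ(a1) = χ(a2) = 1`, `χ` is primitive and `a1 - a2 ∈ ker χ = ℤ χ^⊥`,
so `a1 - a2 = s χ^⊥` with `|s| = L`. Likewise `a2 ∈ ker χ1 = ℤ χ1^⊥`, and `χ(a2) = 1` forces the
determinant `χ · χ1^⊥` to be a unit. Hence `χ1(a1) = χ1(a1 - a2) = s (χ1 · χ^⊥) = ±s`, and
positivity gives `χ1(a1) = |s| = L`. The vectors `a1`, `a2` span because `χ1` vanishes on `a2`
but not on `a1`.
-/

open Matrix

/-- A vector of the lattice `N = ℤ²` (or of the dual lattice `M`) is primitive if the gcd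
of its coordinates is `1`. -/
def IsPrimitive2 (v : Fin 2 → ℤ) : Prop := Int.gcd (v 0) (v 1) = 1

/-- The lattice length of `v ∈ ℤ²`: the largest integer `d` such that `v/d` is a lattice
vector, i.e. the gcd of the coordinates of `v` (for `v ≠ 0`). -/
def latticeLength2 (v : Fin 2 → ℤ) : ℕ := Int.gcd (v 0) (v 1)

theorem span_pair_eq_top_of_apply_eq_zero {K V : Type*} [DivisionRing K] [AddCommGroup V]
    [Module K V] (hV : Module.finrank K V = 2) (f : V →ₗ[K] K) {v w : V} (hw : w ≠ 0)
    (hfv : f v ≠ 0) (hfw : f w = 0) :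
    Submodule.span K {v, w} = ⊤ := by
  have hli : LinearIndependent K ![w, v] := by
    refine (LinearIndependent.pair_iff' hw).mpr fun a hav => hfv ?_
    rw [← hav, map_smul, hfw, smul_zero]
  rw [Set.pair_comm, ← range_cons_cons_empty w v ![]]
  exact hli.span_eq_top_of_card_eq_finrank (by simp [hV])

theorem Int.cast_dotProduct {R : Type*} [Ring R] {n : Type*} [Fintype n] (u v : n → ℤ) :
    ((u ⬝ᵥ v : ℤ) : R) = (fun i => (u i : R)) ⬝ᵥ (fun i => (v i : R)) :=
  (Int.castRingHom R).map_dotProduct u v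

def perp2 (v : Fin 2 → ℤ) : Fin 2 → ℤ := ![-v 1, v 0]

theorem dotProduct_perp2_comm (u v : Fin 2 → ℤ) : u ⬝ᵥ perp2 v = -(v ⬝ᵥ perp2 u) := by
  simp only [vec2_dotProduct, perp2, cons_val_zero, cons_val_one]
  ring

theorem IsPrimitive2.of_dotProduct_eq_one {chi a : Fin 2 → ℤ} (h : chi ⬝ᵥ a = 1) :
    IsPrimitive2 chi :=
  Int.isCoprime_iff_gcd_eq_one.mp ⟨a 0, a 1, by rw [← h, vec2_dotProduct]; ring⟩

theorem IsPrimitive2.eq_smul_perp2_of_dotProduct_eq_zero {u x : Fin 2 → ℤ}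
    (hu : IsPrimitive2 u) (h : u ⬝ᵥ x = 0) : ∃ k : ℤ, x = k • perp2 u := by
  obtain ⟨m, n, hmn⟩ := Int.isCoprime_iff_gcd_eq_one.mpr hu
  rw [vec2_dotProduct] at h
  refine ⟨m * x 1 - n * x 0, funext fun i => ?_⟩
  fin_cases i
  · show x 0 = (m * x 1 - n * x 0) * -u 1
    linear_combination m * h - x 0 * hmn
  · show x 1 = (m * x 1 - n * x 0) * u 0
    linear_combination n * h - x 1 * hmn

theorem latticeLength2_smul (k : ℤ) (v : Fin 2 → ℤ) :
    latticeLength2 (k • v) = k.natAbs * latticeLength2 v :=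
  Int.gcd_mul_left k (v 0) (v 1)

theorem latticeLength2_perp2 (v : Fin 2 → ℤ) : latticeLength2 (perp2 v) = latticeLength2 v := by
  simp [latticeLength2, perp2, Int.gcd_comm]

theorem latticeLength2_neg (v : Fin 2 → ℤ) : latticeLength2 (-v) = latticeLength2 v := by
  simp [latticeLength2]

theorem dotProduct_eq_latticeLength2_sub {chi a b c : Fin 2 → ℤ} (ha : chi ⬝ᵥ a = 1)
    (hb : chi ⬝ᵥ b = 1) (hc : IsPrimitive2 c) (hcb : c ⬝ᵥ b = 0) (hca : 0 < c ⬝ᵥ a) :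
    c ⬝ᵥ a = latticeLength2 (a - b) := by
  have hchi := IsPrimitive2.of_dotProduct_eq_one ha
  obtain ⟨s, hs⟩ := hchi.eq_smul_perp2_of_dotProduct_eq_zero (x := a - b)
    (by rw [dotProduct_sub, ha, hb, sub_self])
  obtain ⟨t, ht⟩ := hc.eq_smul_perp2_of_dotProduct_eq_zero hcb
  have hunit : IsUnit (c ⬝ᵥ perp2 chi) := by
    have : t * (chi ⬝ᵥ perp2 c) = 1 := by rw [← hb, ht, dotProduct_smul, smul_eq_mul]
    rw [dotProduct_perp2_comm, IsUnit.neg_iff]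
    exact .of_mul_eq_one_right t this
  have hca' : c ⬝ᵥ a = s * c ⬝ᵥ perp2 chi := by
    rw [← sub_zero (c ⬝ᵥ a), ← hcb, ← dotProduct_sub, hs, dotProduct_smul, smul_eq_mul]
  have hL : latticeLength2 (a - b) = s.natAbs := by
    rw [hs, latticeLength2_smul, latticeLength2_perp2, show latticeLength2 chi = 1 from hchi,
      mul_one]
  rw [hL, ← Int.natAbs_of_nonneg hca.le, hca', Int.natAbs_mul,
    Int.isUnit_iff_natAbs_eq.mp hunit, mul_one]

theorem stmt8_general (a1 a2 chi chi1 chi2 : Fin 2 → ℤ)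
    (h1 : chi ⬝ᵥ a1 = 1) (h2 : chi ⬝ᵥ a2 = 1)
    (hchi1a : 0 < chi1 ⬝ᵥ a1) (hchi1b : chi1 ⬝ᵥ a2 = 0) (hchi1p : IsPrimitive2 chi1)
    (hchi2a : chi2 ⬝ᵥ a1 = 0) (hchi2b : 0 < chi2 ⬝ᵥ a2) (hchi2p : IsPrimitive2 chi2) :
    Submodule.span ℚ {(fun i => (a1 i : ℚ)), (fun i => (a2 i : ℚ))} =
        (⊤ : Submodule ℚ (Fin 2 → ℚ)) ∧
    chi1 ⬝ᵥ a1 = (latticeLength2 (a1 - a2) : ℤ) ∧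
    chi2 ⬝ᵥ a2 = (latticeLength2 (a1 - a2) : ℤ) := by
  refine ⟨?_, dotProduct_eq_latticeLength2_sub h1 h2 hchi1p hchi1b hchi1a, ?_⟩
  · have ha2 : (fun i => (a2 i : ℚ)) ≠ 0 := fun h => by
      have := Int.cast_dotProduct (R := ℚ) chi2 a2
      rw [h, dotProduct_zero] at this
      exact hchi2b.ne' (by exact_mod_cast this)
    refine span_pair_eq_top_of_apply_eq_zero (Module.finrank_fin_fun ℚ)
      (dotProductBilin ℚ ℚ fun i => (chi1 i : ℚ)) ha2 ?_ ?_
    · rw [dotProductBilin_apply_apply, ← Int.cast_dotProduct]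
      exact_mod_cast hchi1a.ne'
    · rw [dotProductBilin_apply_apply, ← Int.cast_dotProduct]
      exact_mod_cast hchi1b
  · rw [← neg_sub, latticeLength2_neg]
    exact dotProduct_eq_latticeLength2_sub h2 h1 hchi2p hchi2a hchi2b

/-- first part of Lemma `smalllaticepoints`: let `N = ℤ²` with dual `M`,
`a1 ≠ a2` in `N`, and `χ ∈ M` with `χ(a1) = χ(a2) = 1`.  Then `a1`, `a2` span `N ⊗ ℚ`.
Moreover, if `χ1` is the primitive lattice point on the ray
`{χ' : χ'(a1) > 0, χ'(a2) = 0}` and `χ2` the primitive lattice point on the ray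
`{χ' : χ'(a1) = 0, χ'(a2) > 0}`, then `χ1(a1) = χ2(a2) = L` where `L` is the lattice
length of `a1 - a2`. -/
theorem stmt8 (a1 a2 chi chi1 chi2 : Fin 2 → ℤ)
    (hne : a1 ≠ a2) (h1 : chi ⬝ᵥ a1 = 1) (h2 : chi ⬝ᵥ a2 = 1)
    (hchi1a : 0 < chi1 ⬝ᵥ a1) (hchi1b : chi1 ⬝ᵥ a2 = 0) (hchi1p : IsPrimitive2 chi1)
    (hchi2a : chi2 ⬝ᵥ a1 = 0) (hchi2b : 0 < chi2 ⬝ᵥ a2) (hchi2p : IsPrimitive2 chi2) :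
    Submodule.span ℚ {(fun i => (a1 i : ℚ)), (fun i => (a2 i : ℚ))} =
        (⊤ : Submodule ℚ (Fin 2 → ℚ)) ∧
    chi1 ⬝ᵥ a1 = (latticeLength2 (a1 - a2) : ℤ) ∧
    chi2 ⬝ᵥ a2 = (latticeLength2 (a1 - a2) : ℤ) :=
  stmt8_general a1 a2 chi chi1 chi2 h1 h2 hchi1a hchi1b hchi1p hchi2a hchi2b hchi2p
end
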